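/- Let F be an endofunctor on Set and λ a lax distributive law for F. Then L^λ, defined on a relation R : X ⇸ Y by L^λ R := ⌊λ_Y ∘ F χ_R⌋, is a lax F-lifting: it is monotone, laxly functorial, and satisfies gr(F f) ⊆ L^λ (gr f) and (gr(F f))° ⊆ L^λ ((gr f)°) for every function f. -/

import Mathlib

universe u v

open CategoryTheory

/-- The graph of a function, as a relation. -/
def gr {X Y : Type u} (f : X → Y) : Rel X Y := fun x y => f x = y

/-- A lax lifting of an endofunctor `F` on `Set` to relations: monotone, laxly
functorial, and laxly extending graphs and converse graphs. -/
structure LaxLifting (F : Type u ⥤ Type u) : Type (u + 1) where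
  map : ∀ {X Y : Type u}, Rel X Y → Rel (F.obj X) (F.obj Y)
  mono : ∀ {X Y : Type u} {R S : Rel X Y}, R ≤ S → map R ≤ map S
  laxComp : ∀ {X Y Z : Type u} (R : Rel X Y) (S : Rel Y Z),
    Relation.Comp (map R) (map S) ≤ map (Relation.Comp R S)
  graph_le : ∀ {X Y : Type u} (f : X → Y), gr (F.map (TypeCat.ofHom f)) ≤ map (gr f)
  graphInv_le : ∀ {X Y : Type u} (f : X → Y), flip (gr (F.map (TypeCat.ofHom f))) ≤ map (flip (gr f))

/-- Pointwise order on lax liftings. -/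
def LiftLE {F : Type u ⥤ Type u} (L L' : LaxLifting F) : Prop :=
  ∀ (X Y : Type u) (R : Rel X Y), L.map R ≤ L'.map R

/-- A lax distributive law of \`F\` over the powerset monad: a family of maps
\`λ_X : F (P X) → P (F X)\` that is monotone, laxly natural, and laxly compatible
with the unit and multiplication of the powerset monad. -/
structure LaxDistLaw (F : Type u ⥤ Type u) : Type (u + 1) where
  app : ∀ Z : Type u, F.obj (Set Z) → Set (F.obj Z)
  mono : ∀ (X Y : Type u) (f g : X → Set Y), (∀ x, f x ⊆ g x) →
    ∀ a : F.obj X, app Y (F.map (TypeCat.ofHom f) a) ⊆ app Y (F.map (TypeCat.ofHom g) a)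
  laxNat : ∀ (X Y : Type u) (f : X → Set Y) (a : F.obj (Set X)),
    F.map (TypeCat.ofHom f) '' app X a ⊆ app (Set Y) (F.map (TypeCat.ofHom (Set.image f)) a)
  laxMul : ∀ (Z : Type u) (a : F.obj (Set (Set Z))),
    ⋃₀ (app Z '' app (Set Z) a) ⊆ app Z (F.map (TypeCat.ofHom Set.sUnion) a)
  laxUnit : ∀ (Z : Type u) (a : F.obj Z),
    a ∈ app Z (F.map (TypeCat.ofHom (fun z => ({z} : Set Z))) a)

/-- The Kleisli map \`χ_R : X → P Y\` associated to a relation \`R : X ⇸ Y\`. -/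
def chi {X Y : Type u} (R : Rel X Y) : X → Set Y := fun x => {y | R x y}

/-- The membership relation \`∋_Z : P Z ⇸ Z\`. -/
def memRel (Z : Type u) : Rel (Set Z) Z := fun A z => z ∈ A

/-- The lifting assignment \`L^λ\` induced by a distributive-law-shaped family:
\`L^λ R := ⌊λ_Y ∘ F χ_R⌋\`. -/
def toLiftMap (F : Type u ⥤ Type u) (lam : ∀ Z : Type u, F.obj (Set Z) → Set (F.obj Z)) :
    ∀ X Y : Type u, Rel X Y → Rel (F.obj X) (F.obj Y) :=
  fun X Y R a b => b ∈ lam Y (F.map (TypeCat.ofHom (chi R)) a)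

/-- The distributive-law-shaped family \`λ^L\` induced by a lifting assignment:
\`λ^L_Z := χ_{L(∋_Z)}\`. -/
def toLawMap (F : Type u ⥤ Type u)
    (Lm : ∀ X Y : Type u, Rel X Y → Rel (F.obj X) (F.obj Y)) :
    ∀ Z : Type u, F.obj (Set Z) → Set (F.obj Z) :=
  fun Z a => {b | Lm (Set Z) Z (memRel Z) a b}

/-!
Each axiom of a lax lifting is the image under `χ` of an axiom of `λ`. Monotonicity of `L^λ`
is monotonicity of `λ`. For lax functoriality, `χ` sends `R ; S` to the Kleisli composite
`μ ∘ P χ_S ∘ χ_R`, so a witness `a L^λR b L^λS c` is first moved into `λ_{P Z}` by lax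
naturality and then flattened by the lax multiplication law. The graph of `F f` lies in
`L^λ (gr f)` by the lax unit law at `F f a`, since `χ_{gr f} = η ∘ f`; for the converse graph,
the lax unit law at `b` is enlarged by monotonicity along `{x} ⊆ χ_{(gr f)°} (f x)`.
-/

theorem FunctorToTypes.map_ofHom_map_ofHom (F : Type u ⥤ Type u) {X Y Z : Type u}
    (f : X → Y) (g : Y → Z) (a : F.obj X) :
    F.map (TypeCat.ofHom g) (F.map (TypeCat.ofHom f) a) = F.map (TypeCat.ofHom (g ∘ f)) a := by
  rw [← Functor.map_comp_apply]
  rfl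

theorem chi_mono {X Y : Type u} {R S : Rel X Y} (h : R ≤ S) (x : X) : chi R x ⊆ chi S x :=
  fun y hy => h x y hy

theorem chi_comp {X Y Z : Type u} (R : Rel X Y) (S : Rel Y Z) :
    chi (Relation.Comp R S) = Set.sUnion ∘ Set.image (chi S) ∘ chi R := by
  ext x z
  simp only [chi, Relation.Comp, Function.comp_apply, Set.sUnion_image, Set.mem_iUnion,
    Set.mem_ofPred_eq, exists_prop]

theorem chi_gr {X Y : Type u} (f : X → Y) : chi (gr f) = (fun y => ({y} : Set Y)) ∘ f := by
  ext x y
  exact eq_comm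

theorem singleton_subset_chi_flip_gr {X Y : Type u} (f : X → Y) (x : X) :
    ({x} : Set X) ⊆ chi (flip (gr f)) (f x) :=
  Set.singleton_subset_iff.mpr rfl

namespace LaxDistLaw

variable {F : Type u ⥤ Type u} (lam : LaxDistLaw F)

theorem toLiftMap_mono {X Y : Type u} {R S : Rel X Y} (h : R ≤ S) :
    toLiftMap F lam.app X Y R ≤ toLiftMap F lam.app X Y S :=
  fun a => lam.mono X Y (chi R) (chi S) (chi_mono h) a

theorem toLiftMap_comp_le {X Y Z : Type u} (R : Rel X Y) (S : Rel Y Z) :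
    Relation.Comp (toLiftMap F lam.app X Y R) (toLiftMap F lam.app Y Z S) ≤
      toLiftMap F lam.app X Z (Relation.Comp R S) := by
  rintro a c ⟨b, hab, hbc⟩
  have hnat : F.map (TypeCat.ofHom (chi S)) b ∈
      lam.app (Set Z) (F.map (TypeCat.ofHom (Set.image (chi S)))
        (F.map (TypeCat.ofHom (chi R)) a)) :=
    lam.laxNat Y Z (chi S) _ ⟨b, hab, rfl⟩
  have hmul := lam.laxMul Z _ ⟨_, ⟨_, hnat, rfl⟩, hbc⟩
  simpa only [toLiftMap, chi_comp, FunctorToTypes.map_ofHom_map_ofHom] using hmul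

theorem gr_le_toLiftMap {X Y : Type u} (f : X → Y) :
    gr (F.map (TypeCat.ofHom f)) ≤ toLiftMap F lam.app X Y (gr f) := by
  rintro a _ rfl
  simpa only [toLiftMap, chi_gr, FunctorToTypes.map_ofHom_map_ofHom] using
    lam.laxUnit Y (F.map (TypeCat.ofHom f) a)

theorem flip_gr_le_toLiftMap {X Y : Type u} (f : X → Y) :
    flip (gr (F.map (TypeCat.ofHom f))) ≤ toLiftMap F lam.app Y X (flip (gr f)) := by
  rintro _ b rfl
  have h := lam.mono X X _ _ (singleton_subset_chi_flip_gr f) b (lam.laxUnit X b)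
  simpa only [toLiftMap, FunctorToTypes.map_ofHom_map_ofHom] using h

def toLaxLifting : LaxLifting F where
  map {X Y} := toLiftMap F lam.app X Y
  mono := lam.toLiftMap_mono
  laxComp := lam.toLiftMap_comp_le
  graph_le := lam.gr_le_toLiftMap
  graphInv_le := lam.flip_gr_le_toLiftMap

end LaxDistLaw

/-- For any lax distributive law `λ` for `F`, the assignment
`L^λ R := ⌊λ_Y ∘ F χ_R⌋` is a lax `F`-lifting. -/
theorem toLiftMap_is_lax_lifting (F : Type u ⥤ Type u) (lam : LaxDistLaw F) :
    ∃ L : LaxLifting F, ∀ (X Y : Type u) (R : Rel X Y),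
      L.map R = toLiftMap F lam.app X Y R :=
  ⟨lam.toLaxLifting, fun _ _ _ => rfl⟩
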